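/- Let a_1,...,a_n be real numbers with sum zero. Equality ∑ a_i^3 = ((n-2)/√(n(n-1))) · (∑ a_i^2)^(3/2) holds if and only if n−1 of the a_i are non-positive and equal to each other. -/

import Mathlib

/-!
Write `∑ aᵢ² = n(n-1)t²` with `t ≥ 0` and put `M = (n-1)t`. Since `∑ aᵢ = 0`, Cauchy–Schwarz on
the other `n - 1` terms gives `aᵢ ≤ M`, and expanding shows
`∑ (M - aᵢ)(aᵢ + t)² = n(n-1)(n-2)t³ - ∑ aᵢ³`, while the right-hand side of the claimed equality
is `n(n-1)(n-2)t³`. So equality holds iff every `aᵢ` is `M` or `-t`; if some `aⱼ = M`, the other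
`aᵢ + t ≥ 0` sum to `M - (n-1)t = 0`, hence all vanish.
-/

open Finset

lemma rpow_three_halves_of_sq {u : ℝ} (hu : 0 ≤ u) : (u ^ 2) ^ ((3 : ℝ) / 2) = u ^ 3 := by
  rw [← Real.rpow_natCast u 2, ← Real.rpow_mul hu]
  norm_num

lemma div_sqrt_mul_rpow_three_halves (y : ℝ) {x t : ℝ} (hx : 0 ≤ x) (ht : 0 ≤ t) :
    y / √x * (x * t ^ 2) ^ ((3 : ℝ) / 2) = y * x * t ^ 3 := by
  rcases hx.eq_or_lt with rfl | hx
  · simp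
  have hsx : 0 < √x := Real.sqrt_pos.mpr hx
  rw [show x * t ^ 2 = (√x * t) ^ 2 by rw [mul_pow, Real.sq_sqrt hx.le],
    rpow_three_halves_of_sq (mul_nonneg hsx.le ht)]
  field_simp
  rw [Real.sq_sqrt hx.le]
  ring

section

variable {ι : Type*} [Fintype ι] {a : ι → ℝ}

lemma sum_comp_eq_add_of_forall_ne {j : ι} {c : ℝ} (h : ∀ i ≠ j, a i = c) (f : ℝ → ℝ) :
    ∑ i, f (a i) = f (a j) + ((Fintype.card ι : ℝ) - 1) * f c := by
  classical
  rw [← add_sum_erase _ _ (mem_univ j), sum_congr rfl fun i hi => by rw [h i (ne_of_mem_erase hi)],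
    sum_const, nsmul_eq_mul, cast_card_erase_of_mem (mem_univ j), card_univ]

lemma sum_sq_and_sum_cube_of_forall_ne (hsum : ∑ i, a i = 0) {j : ι} {t : ℝ}
    (h : ∀ i ≠ j, a i = -t) :
    ∑ i, a i ^ 2 = Fintype.card ι * (Fintype.card ι - 1) * t ^ 2 ∧
      ∑ i, a i ^ 3 = Fintype.card ι * (Fintype.card ι - 1) * (Fintype.card ι - 2) * t ^ 3 := by
  have haj : a j = (Fintype.card ι - 1) * t := by
    have := sum_comp_eq_add_of_forall_ne h id
    simp only [id] at this
    linarith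
  rw [sum_comp_eq_add_of_forall_ne h (· ^ 2), sum_comp_eq_add_of_forall_ne h (· ^ 3), haj]
  constructor <;> ring

lemma card_mul_sq_le_of_sum_eq_zero (hsum : ∑ i, a i = 0) (i : ι) :
    Fintype.card ι * a i ^ 2 ≤ (Fintype.card ι - 1) * ∑ k, a k ^ 2 := by
  classical
  have hcs := sq_sum_le_card_mul_sum_sq (s := univ.erase i) (f := a)
  rw [cast_card_erase_of_mem (mem_univ i), card_univ] at hcs
  rw [← add_sum_erase _ _ (mem_univ i)] at hsum ⊢
  rw [eq_neg_of_add_eq_zero_right hsum, neg_sq] at hcs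
  linarith

lemma sum_sub_mul_add_sq_eq (hsum : ∑ i, a i = 0) {t : ℝ}
    (hS : ∑ i, a i ^ 2 = Fintype.card ι * (Fintype.card ι - 1) * t ^ 2) :
    ∑ i, ((Fintype.card ι - 1) * t - a i) * (a i + t) ^ 2 =
      Fintype.card ι * (Fintype.card ι - 1) * (Fintype.card ι - 2) * t ^ 3 - ∑ i, a i ^ 3 := by
  have expand : ∀ x : ℝ, ((Fintype.card ι - 1) * t - x) * (x + t) ^ 2 =
      (Fintype.card ι - 1) * t ^ 3 + ((Fintype.card ι - 3) * t) * x ^ 2 +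
        ((2 * Fintype.card ι - 3) * t ^ 2) * x - x ^ 3 := fun x => by ring
  simp only [expand, sum_add_distrib, sum_sub_distrib, ← mul_sum, sum_const, card_univ,
    nsmul_eq_mul, hsum, hS]
  ring

lemma exists_forall_ne_eq_neg_of_sum_cube_eq [Nonempty ι] (hsum : ∑ i, a i = 0) {t : ℝ}
    (ht : 0 ≤ t) (hS : ∑ i, a i ^ 2 = Fintype.card ι * (Fintype.card ι - 1) * t ^ 2)
    (hcube : ∑ i, a i ^ 3 = Fintype.card ι * (Fintype.card ι - 1) * (Fintype.card ι - 2) * t ^ 3) :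
    ∃ j, ∀ i ≠ j, a i = -t := by
  classical
  have hN : (1 : ℝ) ≤ Fintype.card ι := by exact_mod_cast Fintype.card_pos
  have hle (i : ι) : a i ≤ (Fintype.card ι - 1) * t := by
    have hcs := card_mul_sq_le_of_sum_eq_zero hsum i
    rw [hS] at hcs
    have hsq : a i ^ 2 ≤ ((Fintype.card ι - 1) * t) ^ 2 :=
      le_of_mul_le_mul_left (a := (Fintype.card ι : ℝ)) (by linarith) (by linarith)
    exact (abs_le_of_sq_le_sq' hsq (mul_nonneg (sub_nonneg.mpr hN) ht)).2
  have hdich (i : ι) : a i = (Fintype.card ι - 1) * t ∨ a i = -t := by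
    have hterm := (sum_eq_zero_iff_of_nonneg fun i _ =>
      mul_nonneg (sub_nonneg.mpr (hle i)) (sq_nonneg (a i + t))).mp
      (by rw [sum_sub_mul_add_sq_eq hsum hS, hcube, sub_self]) i (mem_univ i)
    rcases mul_eq_zero.mp hterm with h | h
    · exact Or.inl (by linarith)
    · exact Or.inr (by linarith [pow_eq_zero_iff two_ne_zero |>.mp h])
  have hge (i : ι) : -t ≤ a i := by
    rcases hdich i with h | h <;> nlinarith
  obtain ⟨j, -, hj⟩ := exists_max_image univ a univ_nonempty
  refine ⟨j, fun i hi => ?_⟩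
  rcases hdich j with hjM | hjt
  · have hrest : ∑ k ∈ univ.erase j, (a k + t) = 0 := by
      rw [sum_add_distrib, sum_const, nsmul_eq_mul, cast_card_erase_of_mem (mem_univ j),
        card_univ]
      linarith [add_sum_erase univ a (mem_univ j)]
    have hi0 := (sum_eq_zero_iff_of_nonneg fun k _ => neg_le_iff_add_nonneg.mp (hge k)).mp hrest i
      (mem_erase.mpr ⟨hi, mem_univ i⟩)
    linarith
  · linarith [hj i (mem_univ i), hge i]

end

theorem sum_cubes_eq_iff (n : ℕ) (hn : 2 ≤ n) (a : Fin n → ℝ)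
    (hsum : ∑ i, a i = 0) :
    (∑ i, (a i)^3 = (((n : ℝ) - 2) / Real.sqrt (n * (n - 1))) *
        (∑ i, (a i)^2) ^ ((3 : ℝ) / 2)) ↔
      ∃ (j : Fin n) (c : ℝ), c ≤ 0 ∧ ∀ i, i ≠ j → a i = c := by
  have hpos : (0 : ℝ) < n * (n - 1) := by
    have : (2 : ℝ) ≤ n := by exact_mod_cast hn
    nlinarith
  have hcard : (Fintype.card (Fin n) : ℝ) = n := by simp
  constructor
  · intro h
    have : Nonempty (Fin n) := ⟨⟨0, by omega⟩⟩
    set t := √((∑ i, a i ^ 2) / (n * (n - 1)))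
    have hS : ∑ i, a i ^ 2 = n * (n - 1) * t ^ 2 := by
      rw [Real.sq_sqrt (div_nonneg (sum_nonneg fun i _ => sq_nonneg (a i)) hpos.le),
        mul_div_cancel₀ _ hpos.ne']
    rw [hS, div_sqrt_mul_rpow_three_halves _ hpos.le (Real.sqrt_nonneg _)] at h
    obtain ⟨j, hj⟩ := exists_forall_ne_eq_neg_of_sum_cube_eq hsum (Real.sqrt_nonneg _)
      (hcard ▸ hS) (by rw [hcard, h]; ring)
    exact ⟨j, -t, neg_nonpos.mpr (Real.sqrt_nonneg _), hj⟩
  · rintro ⟨j, c, hc, hj⟩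
    obtain ⟨hS, hcube⟩ := sum_sq_and_sum_cube_of_forall_ne hsum (t := -c) (by simpa using hj)
    rw [hcard] at hS hcube
    rw [hS, hcube, div_sqrt_mul_rpow_three_halves _ hpos.le (neg_nonneg.mpr hc)]
    ring
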